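/- Let D denote the subspace of Matrix (Fin 3) (Fin 3) ℝ consisting of symmetric traceless matrices (Mᵀ = M and Matrix.trace M = 0). If U is an ℝ-submodule of Matrix (Fin 3) (Fin 3) ℝ with U ≤ D such that Q * M * Qᵀ ∈ U for every Q ∈ SO(3) and every M ∈ U, then U = ⊥ or U = D. (The SO(3)-representation on deviatoric second-order tensors, i.e. ℍ², is irreducible.) -/

import Mathlib

/-!
Conjugating by a permutation matrix twisted by its sign (a rotation, since `3` is odd) permutes
the entries of a matrix, and a rotation about the third axis with rational cosine `3/5`
turns a difference of diagonal entries into an off-diagonal one. Hence a nonzero invariant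
subspace `U` of traceless symmetric matrices contains some `M` with `M 0 1 ≠ 0`. Averaging `M`
with signs over the half-turns about the coordinate axes isolates this entry, so `U` contains
`E₀₁ + E₁₀`; permuting and rotating it produces a basis of all traceless symmetric matrices.
-/

open Matrix

/-- The space of symmetric traceless (deviatoric) 3×3 real matrices, i.e. ℍ². -/
def Dev3 : Submodule ℝ (Matrix (Fin 3) (Fin 3) ℝ) where
  carrier := {M | Mᵀ = M ∧ Matrix.trace M = 0}
  add_mem' := by
    rintro a b ⟨ha1, ha2⟩ ⟨hb1, hb2⟩
    constructor
    · rw [Matrix.transpose_add, ha1, hb1]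
    · rw [Matrix.trace_add, ha2, hb2, add_zero]
  zero_mem' := by
    constructor
    · exact Matrix.transpose_zero
    · simp
  smul_mem' := by
    rintro c a ⟨ha1, ha2⟩
    constructor
    · rw [Matrix.transpose_smul, ha1]
    · rw [Matrix.trace_smul, ha2, smul_zero]

open Equiv

namespace Matrix

variable {n R : Type*} [Fintype n] [DecidableEq n]

theorem permMatrix_mul_mul_transpose_permMatrix [NonAssocSemiring R] (σ : Perm n)
    (M : Matrix n n R) : σ.permMatrix R * M * (σ.permMatrix R)ᵀ = M.submatrix σ σ := by
  rw [transpose_permMatrix, PEquiv.toMatrix_toPEquiv_mul, PEquiv.mul_toMatrix_toPEquiv]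
  rfl

theorem diagonal_mul_mul_transpose_diagonal_apply [CommSemiring R] (d : n → R)
    (M : Matrix n n R) (i j : n) :
    (diagonal d * M * (diagonal d)ᵀ) i j = d i * d j * M i j := by
  rw [diagonal_transpose, mul_diagonal, diagonal_mul]
  ring

end Matrix

theorem Equiv.Perm.exists_apply_eq_and_apply_eq {α : Type*} [DecidableEq α] {a b i j : α}
    (hab : a ≠ b) (hij : i ≠ j) : ∃ σ : Perm α, σ a = i ∧ σ b = j := by
  have hj : swap a i j ≠ a := by
    rw [Ne, swap_apply_eq_iff, swap_apply_left]
    exact hij.symm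
  refine ⟨swap a i * swap b (swap a i j), ?_, by simp [swap_apply_self]⟩
  simp [swap_apply_of_ne_of_ne hab hj.symm]

local notation "M₃" => Matrix (Fin 3) (Fin 3) ℝ

def IsSO3Invariant (U : Submodule ℝ M₃) : Prop :=
  ∀ Q : M₃, Qᵀ * Q = 1 → Q.det = 1 → ∀ M ∈ U, Q * M * Qᵀ ∈ U

def symmSingle (i j : Fin 3) : M₃ := single i j 1 + single j i 1

def halfTurn (k : Fin 3) : M₃ := diagonal fun i => if i = k then 1 else -1

theorem halfTurn_transpose_mul_self (k : Fin 3) : (halfTurn k)ᵀ * halfTurn k = 1 := by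
  rw [halfTurn, diagonal_transpose, diagonal_mul_diagonal, ← diagonal_one]
  congr 1
  ext i
  split_ifs <;> norm_num

theorem det_halfTurn (k : Fin 3) : (halfTurn k).det = 1 := by
  fin_cases k <;> simp [halfTurn, Fin.prod_univ_three]

theorem halfTurn_mul_mul_transpose_apply (k : Fin 3) (M : M₃) (i j : Fin 3) :
    (halfTurn k * M * (halfTurn k)ᵀ) i j =
      (if i = k then 1 else -1) * (if j = k then 1 else -1) * M i j :=
  diagonal_mul_mul_transpose_diagonal_apply _ M i j

/-- Rational entries (cosine `3/5`, sine `4/5`) avoid `√2`: any angle that is not a multiple of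
`π/2` would do. -/
noncomputable def rot : M₃ := !![3/5, -(4/5), 0; 4/5, 3/5, 0; 0, 0, 1]

theorem rot_transpose_mul_self : rotᵀ * rot = 1 := by
  ext i j
  fin_cases i <;> fin_cases j <;>
    simp [rot, mul_apply, Fin.sum_univ_three, one_apply, -cons_mul] <;> norm_num

theorem det_rot : rot.det = 1 := by
  simp [rot, det_fin_three]
  norm_num

theorem rot_mul_mul_transpose_apply_zero_one (M : M₃) :
    (rot * M * rotᵀ) 0 1 = 12 / 25 * (M 0 0 - M 1 1) + 9 / 25 * M 0 1 - 16 / 25 * M 1 0 := by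
  simp [rot, mul_apply, Fin.sum_univ_three, -cons_mul]
  ring

theorem rot_mul_symmSingle_mul_transpose :
    rot * symmSingle 0 1 * rotᵀ =
      -(24 / 25 : ℝ) • (single 0 0 1 - single 1 1 1) - (7 / 25 : ℝ) • symmSingle 0 1 := by
  ext i j
  fin_cases i <;> fin_cases j <;>
    simp [rot, symmSingle, mul_apply, Fin.sum_univ_three, single_apply, -cons_mul] <;> norm_num

theorem Dev3_le_of_forall_mem {U : Submodule ℝ M₃}
    (hoff : ∀ i j, i ≠ j → symmSingle i j ∈ U)
    (hdiag : ∀ i j, i ≠ j → single i i 1 - single j j 1 ∈ U) : Dev3 ≤ U := by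
  rintro N ⟨hNs : N.IsSymm, hNt⟩
  rw [trace_fin_three] at hNt
  have hN : N = N 0 1 • symmSingle 0 1 + N 0 2 • symmSingle 0 2 + N 1 2 • symmSingle 1 2 +
      N 0 0 • (single 0 0 1 - single 2 2 1) + N 1 1 • (single 1 1 1 - single 2 2 1) := by
    ext i j
    fin_cases i <;> fin_cases j <;>
      simp [symmSingle, ← hNs.apply 0 1, ← hNs.apply 0 2, ← hNs.apply 1 2]
    linarith
  rw [hN]
  refine add_mem (add_mem (add_mem (add_mem ?_ ?_) ?_) ?_) ?_ <;> refine U.smul_mem _ ?_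
  exacts [hoff 0 1 (by decide), hoff 0 2 (by decide), hoff 1 2 (by decide),
    hdiag 0 2 (by decide), hdiag 1 2 (by decide)]

namespace IsSO3Invariant

variable {U : Submodule ℝ M₃} {M : M₃}

theorem submatrix_mem (hU : IsSO3Invariant U) (σ : Perm (Fin 3)) (hM : M ∈ U) :
    M.submatrix σ σ ∈ U := by
  -- `det (s • P) = s ^ 3 * s = 1` because `3` is odd.
  set s : ℝ := ((Perm.sign σ : ℤ) : ℝ)
  have hs : s * s = 1 := by simp [s, ← Int.cast_mul, ← Units.val_mul, Int.units_mul_self]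
  have hP : (σ.permMatrix ℝ)ᵀ * σ.permMatrix ℝ = 1 := by
    rw [transpose_permMatrix, ← permMatrix_mul, mul_inv_cancel, permMatrix_one]
  have h := hU (s • σ.permMatrix ℝ) (by rw [transpose_smul, smul_mul_smul, hP, hs, one_smul])
    (by rw [det_smul, det_permutation, Fintype.card_fin]; linear_combination (s * s + 1) * hs) M hM
  rwa [transpose_smul, smul_mul, smul_mul_smul, hs, one_smul,
    permMatrix_mul_mul_transpose_permMatrix] at h

theorem symmSingle_zero_one_mem (hU : IsSO3Invariant U) (hM : M ∈ U) (hMs : M.IsSymm)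
    (h01 : M 0 1 ≠ 0) : symmSingle 0 1 ∈ U := by
  have hflip (k : Fin 3) : halfTurn k * M * (halfTurn k)ᵀ ∈ U :=
    hU _ (halfTurn_transpose_mul_self k) (det_halfTurn k) M hM
  -- Each half-turn multiplies the entry `(i, j)` by a sign; the signed sum below has weight `4`
  -- on the entries `(0, 1)` and `(1, 0)` and weight `0` everywhere else.
  have key : M 0 1 • symmSingle 0 1 = (4 : ℝ)⁻¹ •
      (M - halfTurn 0 * M * (halfTurn 0)ᵀ - halfTurn 1 * M * (halfTurn 1)ᵀ +
        halfTurn 2 * M * (halfTurn 2)ᵀ) := by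
    ext i j
    fin_cases i <;> fin_cases j <;>
      simp [halfTurn_mul_mul_transpose_apply, symmSingle, hMs.apply 0 1] <;> ring
  rw [← U.smul_mem_iff h01, key]
  exact U.smul_mem _ (add_mem (sub_mem (sub_mem hM (hflip 0)) (hflip 1)) (hflip 2))

theorem symmSingle_mem (hU : IsSO3Invariant U) (h : symmSingle 0 1 ∈ U) {i j : Fin 3}
    (hij : i ≠ j) : symmSingle i j ∈ U := by
  obtain ⟨σ, rfl, rfl⟩ := Perm.exists_apply_eq_and_apply_eq zero_ne_one hij
  simpa [symmSingle, submatrix_add] using hU.submatrix_mem σ.symm h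

theorem single_sub_single_mem (hU : IsSO3Invariant U) (h : symmSingle 0 1 ∈ U) {i j : Fin 3}
    (hij : i ≠ j) : single i i 1 - single j j 1 ∈ U := by
  have h01 : single 0 0 1 - single 1 1 1 ∈ U := by
    have hR := hU rot rot_transpose_mul_self det_rot _ h
    rw [rot_mul_symmSingle_mul_transpose] at hR
    have := U.smul_mem (-(25 / 24 : ℝ)) (add_mem hR (U.smul_mem (7 / 25 : ℝ) h))
    convert this using 1
    module
  obtain ⟨σ, rfl, rfl⟩ := Perm.exists_apply_eq_and_apply_eq zero_ne_one hij
  simpa [submatrix_sub] using hU.submatrix_mem σ.symm h01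

theorem eq_zero_of_forall_apply_zero_one_eq_zero (hU : IsSO3Invariant U) (hMD : M ∈ Dev3)
    (hM : M ∈ U) (h : ∀ N ∈ U, N 0 1 = 0) : M = 0 := by
  have hoff (i j : Fin 3) (hij : i ≠ j) : M i j = 0 := by
    obtain ⟨σ, rfl, rfl⟩ := Perm.exists_apply_eq_and_apply_eq zero_ne_one hij
    exact h _ (hU.submatrix_mem σ hM)
  have hdiag (i j : Fin 3) (hij : i ≠ j) : M i i = M j j := by
    obtain ⟨σ, rfl, rfl⟩ := Perm.exists_apply_eq_and_apply_eq zero_ne_one hij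
    have hR := h _ (hU rot rot_transpose_mul_self det_rot _ (hU.submatrix_mem σ hM))
    rw [rot_mul_mul_transpose_apply_zero_one] at hR
    simp only [submatrix_apply, hoff _ _ hij, hoff _ _ hij.symm] at hR
    linarith
  have htr : M 0 0 + M 1 1 + M 2 2 = 0 := by rw [← trace_fin_three]; exact hMD.2
  ext i j
  obtain rfl | hij := eq_or_ne i j
  · have := hdiag 0 1 (by decide)
    have := hdiag 0 2 (by decide)
    fin_cases i <;> simp <;> linarith
  · exact hoff i j hij

end IsSO3Invariant

theorem deviatoric_representation_irreducible
    (U : Submodule ℝ (Matrix (Fin 3) (Fin 3) ℝ)) (hUD : U ≤ Dev3)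
    (hUinv : ∀ Q : Matrix (Fin 3) (Fin 3) ℝ, Qᵀ * Q = 1 → Q.det = 1 →
      ∀ M ∈ U, Q * M * Qᵀ ∈ U) :
    U = ⊥ ∨ U = Dev3 := by
  have hU : IsSO3Invariant U := hUinv
  by_cases h : ∀ N ∈ U, N 0 1 = 0
  · exact .inl <| (Submodule.eq_bot_iff U).2 fun M hM =>
      hU.eq_zero_of_forall_apply_zero_one_eq_zero (hUD hM) hM h
  · push Not at h
    obtain ⟨N, hN, hN01⟩ := h
    have h01 := hU.symmSingle_zero_one_mem hN (hUD hN).1 hN01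
    exact .inr <| le_antisymm hUD <|
      Dev3_le_of_forall_mem (fun _ _ => hU.symmSingle_mem h01)
        (fun _ _ => hU.single_sub_single_mem h01)
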